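/- Let g be a continuous distortion function and set α_j = g(j/n) for j = 0,…,n. Then for every j = 0,…,n−1 with α_j < 1 and every x ∈ ℝⁿ, the scaled generalized-ES norm satisfies ⟨⟨x⟩⟩_{α_j}^{S,g} = (1/(1−α_j)) Σ_{i=j+1}^n c_i |x|_(i), where c_i = g(i/n) − g((i−1)/n) = α_i − α_{i−1}. -/
import Mathlib


open Finset

/-- The absolute values of the components of `x`, arranged in increasing order:
`absSorted x i` is `|x|_(i+1)` in the paper's notation. -/
noncomputable def absSorted {n : ℕ} (x : Fin n → ℝ) : Fin n → ℝ :=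
  fun i => |x (Tuple.sort (fun j => |x j|) i)|

/-- `coeff n g i = g((i+1)/n) - g(i/n)`, the paper's `c_{i+1}`. -/
noncomputable def coeff (n : ℕ) (g : ℝ → ℝ) (i : Fin n) : ℝ :=
  g (((i : ℕ) + 1 : ℝ) / n) - g (((i : ℕ) : ℝ) / n)

/-- The objective function whose infimum over `t` defines the scaled generalized-ES norm. -/
noncomputable def sgesObj {n : ℕ} (g : ℝ → ℝ) (α : ℝ) (x : Fin n → ℝ) (t : ℝ) : ℝ :=
  t + (1 - α)⁻¹ * ∑ i, coeff n g i * max (absSorted x i - t) 0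

/-- The scaled generalized-ES norm `⟨⟨x⟩⟩_α^{S,g}`. -/
noncomputable def sges {n : ℕ} (g : ℝ → ℝ) (α : ℝ) (x : Fin n → ℝ) : ℝ :=
  ⨅ t : ℝ, sgesObj g α x t

/-- The non-scaled generalized-ES norm `⟨⟨x⟩⟩_α^{g} = n(1-α)⟨⟨x⟩⟩_α^{S,g}`. -/
noncomputable def nges {n : ℕ} (g : ℝ → ℝ) (α : ℝ) (x : Fin n → ℝ) : ℝ :=
  (n : ℝ) * (1 - α) * sges g α x

/-- The dual norm of a (norm) functional `N` on `ℝⁿ`. -/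
noncomputable def dualNorm {n : ℕ} (N : (Fin n → ℝ) → ℝ) (y : Fin n → ℝ) : ℝ :=
  sSup {r : ℝ | ∃ x : Fin n → ℝ, N x ≤ 1 ∧ r = ∑ i, x i * y i}

/-- The ordered weighted L1 (OWL) norm. -/
noncomputable def owl {n : ℕ} (w : Fin n → ℝ) (x : Fin n → ℝ) : ℝ :=
  ∑ i, w i * absSorted x i

lemma absSorted_mono {n : ℕ} (x : Fin n → ℝ) : Monotone (absSorted x) :=
  Tuple.monotone_sort (fun j => |x j|)

lemma coeff_nonneg {n : ℕ} (hn : 1 ≤ n) (g : ℝ → ℝ)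
    (hg_mono : MonotoneOn g (Set.Icc 0 1)) (i : Fin n) : 0 ≤ coeff n g i := by
  have hn' : (0:ℝ) < n := by exact_mod_cast hn
  have h1 : ((i:ℕ):ℝ)/n ∈ Set.Icc (0:ℝ) 1 := by
    constructor
    · positivity
    · rw [div_le_one hn']; exact_mod_cast i.2.le
  have h2 : (((i:ℕ):ℝ)+1)/n ∈ Set.Icc (0:ℝ) 1 := by
    constructor
    · positivity
    · rw [div_le_one hn']; exact_mod_cast i.2
  have := hg_mono h1 h2 ((div_le_div_iff_of_pos_right hn').mpr (by linarith))
  simpa [coeff] using sub_nonneg.mpr this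

lemma coeff_sum {n : ℕ} (hn : 1 ≤ n) (g : ℝ → ℝ) (hg1 : g 1 = 1)
    (j : ℕ) (hj : j < n) :
    ∑ i ∈ Finset.univ.filter (fun i : Fin n => j ≤ (i : ℕ)), coeff n g i
      = 1 - g ((j : ℝ) / n) := by
  have hn' : (0:ℝ) < n := by exact_mod_cast hn
  have h1 : ∑ i ∈ Finset.univ.filter (fun i : Fin n => j ≤ (i : ℕ)), coeff n g i
      = ∑ i : Fin n, if j ≤ (i:ℕ) then (g (((i:ℕ)+1:ℝ)/n) - g (((i:ℕ):ℝ)/n)) else 0 := by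
    rw [Finset.sum_filter]; rfl
  rw [h1, Fin.sum_univ_eq_sum_range (fun i : ℕ => if j ≤ i then (g ((i+1:ℝ)/n) - g ((i:ℝ)/n)) else 0), ← Finset.sum_filter]
  have h2 : (Finset.range n).filter (fun i => j ≤ i) = Finset.Ico j n := by
    ext i; simp [Finset.mem_Ico, and_comm]
  rw [h2]
  have h3 : ∑ i ∈ Finset.Ico j n, (g ((i+1:ℝ)/n) - g ((i:ℝ)/n))
      = g ((n:ℝ)/n) - g ((j:ℝ)/n) := by
    rw [Finset.sum_Ico_eq_sub _ hj.le]
    simp_rw [show ∀ k:ℕ, ((k:ℝ)+1) = ((k+1:ℕ):ℝ) by intro k; push_cast; ring]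
    rw [Finset.sum_range_sub (fun i : ℕ => g ((i:ℝ)/n)), Finset.sum_range_sub (fun i : ℕ => g ((i:ℝ)/n))]
    ring
  rw [h3, div_self hn'.ne', hg1]

/-- at the grid points `α_j = g(j/n)`, `j = 0,…,n-1`, with `α_j < 1`,
the scaled generalized-ES norm equals `(1/(1-α_j)) ∑_{i=j+1}^n cᵢ |x|₍ᵢ₎`
(the paper's 1-based index `i ∈ {j+1,…,n}` is the 0-based index `i ∈ {j,…,n-1}`). -/
theorem stmt6 (n : ℕ) (hn : 1 ≤ n) (g : ℝ → ℝ)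
    (hg_mono : MonotoneOn g (Set.Icc 0 1)) (hg0 : g 0 = 0) (hg1 : g 1 = 1)
    (hg_cont : ContinuousOn g (Set.Icc 0 1))
    (j : ℕ) (hj : j < n) (hαj : g ((j : ℝ) / n) < 1) (x : Fin n → ℝ) :
    sges g (g ((j : ℝ) / n)) x
      = (1 - g ((j : ℝ) / n))⁻¹ *
          ∑ i ∈ Finset.univ.filter (fun i : Fin n => j ≤ (i : ℕ)),
            coeff n g i * absSorted x i := by
  set α := g ((j : ℝ) / n) with hα_def
  have hα : (0:ℝ) < 1 - α := by linarith
  set s := absSorted x with hs_def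
  set F := Finset.univ.filter (fun i : Fin n => j ≤ (i : ℕ)) with hF_def
  set R := (1 - α)⁻¹ * ∑ i ∈ F, coeff n g i * s i with hR_def
  have hcsum : ∑ i ∈ F, coeff n g i = 1 - α := coeff_sum hn g hg1 j hj
  have hcnn : ∀ i : Fin n, 0 ≤ coeff n g i := coeff_nonneg hn g hg_mono
  -- lower bound
  have hlb : ∀ t, R ≤ sgesObj g α x t := by
    intro t
    have step1 : ∑ i ∈ F, coeff n g i * s i
        ≤ ∑ i ∈ F, coeff n g i * (t + max (s i - t) 0) :=
      Finset.sum_le_sum fun i _ => mul_le_mul_of_nonneg_left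
        (by have := le_max_left (s i - t) 0; linarith) (hcnn i)
    have step2 : ∑ i ∈ F, coeff n g i * (t + max (s i - t) 0)
        = (1 - α) * t + ∑ i ∈ F, coeff n g i * max (s i - t) 0 := by
      simp_rw [mul_add]
      rw [Finset.sum_add_distrib, ← Finset.sum_mul, hcsum]
    have step3 : ∑ i ∈ F, coeff n g i * max (s i - t) 0
        ≤ ∑ i, coeff n g i * max (s i - t) 0 :=
      Finset.sum_le_sum_of_subset_of_nonneg (Finset.filter_subset _ _)
        fun i _ _ => mul_nonneg (hcnn i) (le_max_right _ _)
    have key : ∑ i ∈ F, coeff n g i * s i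
        ≤ (1 - α) * t + ∑ i, coeff n g i * max (s i - t) 0 := by linarith
    have h2 : R ≤ (1 - α)⁻¹ * ((1 - α) * t + ∑ i, coeff n g i * max (s i - t) 0) := by
      rw [hR_def]
      exact mul_le_mul_of_nonneg_left key (by positivity)
    calc R ≤ (1 - α)⁻¹ * ((1 - α) * t + ∑ i, coeff n g i * max (s i - t) 0) := h2
      _ = t + (1 - α)⁻¹ * ∑ i, coeff n g i * max (s i - t) 0 := by
          rw [mul_add, ← mul_assoc, inv_mul_cancel₀ hα.ne', one_mul]
      _ = sgesObj g α x t := rfl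
  -- value at t₀ = s ⟨j, hj⟩
  set jF : Fin n := ⟨j, hj⟩ with hjF
  set t₀ := s jF with ht₀
  have hval : sgesObj g α x t₀ = R := by
    have hsplit : ∑ i, coeff n g i * max (s i - t₀) 0
        = ∑ i ∈ F, coeff n g i * (s i - t₀) := by
      rw [← Finset.sum_filter_add_sum_filter_not Finset.univ (fun i : Fin n => j ≤ (i : ℕ))
        (fun i => coeff n g i * max (s i - t₀) 0)]
      have h1 : ∀ i ∈ F, coeff n g i * max (s i - t₀) 0 = coeff n g i * (s i - t₀) := by
        intro i hi
        have hji : jF ≤ i := by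
          simp only [hF_def, Finset.mem_filter] at hi
          exact hi.2
        have : t₀ ≤ s i := absSorted_mono x hji
        rw [max_eq_left (by linarith)]
      have h2 : ∀ i ∈ Finset.univ.filter (fun i : Fin n => ¬ j ≤ (i : ℕ)),
          coeff n g i * max (s i - t₀) 0 = 0 := by
        intro i hi
        simp only [Finset.mem_filter] at hi
        have hij : i ≤ jF := le_of_lt (by exact_mod_cast Nat.lt_of_not_le hi.2)
        have : s i ≤ t₀ := absSorted_mono x hij
        rw [max_eq_right (by linarith), mul_zero]
      rw [Finset.sum_congr rfl h1, Finset.sum_eq_zero h2, add_zero]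
    have hsum2 : ∑ i ∈ F, coeff n g i * (s i - t₀)
        = (∑ i ∈ F, coeff n g i * s i) - (1 - α) * t₀ := by
      simp_rw [mul_sub]
      rw [Finset.sum_sub_distrib, ← Finset.sum_mul, hcsum]
    show t₀ + (1 - α)⁻¹ * ∑ i, coeff n g i * max (s i - t₀) 0 = R
    rw [hsplit, hsum2, mul_sub, ← mul_assoc, inv_mul_cancel₀ hα.ne', one_mul, hR_def]
    ring
  refine le_antisymm ?_ (le_ciInf hlb)
  have hbdd : BddBelow (Set.range (sgesObj g α x)) := by
    refine ⟨R, ?_⟩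
    rintro r ⟨t, rfl⟩
    exact hlb t
  exact (ciInf_le hbdd t₀).trans hval.le
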